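/- arXiv:2305.10886 — 5 statements merged into one kernel-verified Lean document; each statement's English description precedes it below -/
import Mathlib

section
/- Let (Z, Y) be random variables with Z taking values in [0,1] and Y taking values in {0,1}, and let h : [0,1] → [0,1] be measurable. Then E[(h(Z) − E[Y | Z])²] = E[(h(Z) − E[Y | h(Z)])²] + E[(E[Y | h(Z)] − E[Y | Z])²]. -/
open MeasureTheory

theorem aux_decomp {Ω : Type*} [m0 : MeasurableSpace Ω] (ℙ : Measure Ω) [IsProbabilityMeasure ℙ]
    (m1 m2 : MeasurableSpace Ω) (hm1 : m1 ≤ m0) (hm2 : m2 ≤ m0) (hm21 : m2 ≤ m1)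
    (F Y : Ω → ℝ) (hF : @Measurable Ω ℝ m2 _ F) (hFb : ∀ ω, |F ω| ≤ 1)
    (hY : @Measurable Ω ℝ m0 _ Y) (hYb : ∀ ω, 0 ≤ Y ω ∧ Y ω ≤ 1) :
    ∫ ω, (F ω - (ℙ[Y | m1]) ω) ^ 2 ∂ℙ =
      (∫ ω, (F ω - (ℙ[Y | m2]) ω) ^ 2 ∂ℙ) +
      ∫ ω, ((ℙ[Y | m2]) ω - (ℙ[Y | m1]) ω) ^ 2 ∂ℙ := by
  set f : Ω → ℝ := ℙ[Y | m1] with hfdef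
  set g : Ω → ℝ := ℙ[Y | m2] with hgdef
  have hY0 : (0:Ω → ℝ) ≤ᵐ[ℙ] Y := Filter.Eventually.of_forall fun ω => (hYb ω).1
  have hY1 : Y ≤ᵐ[ℙ] (fun _ => (1:ℝ)) := Filter.Eventually.of_forall fun ω => (hYb ω).2
  have hYint : Integrable Y ℙ :=
    (memLp_top_of_bound hY.aestronglyMeasurable 1 (Filter.Eventually.of_forall fun ω => by
      have := hYb ω; rw [Real.norm_eq_abs, abs_le]; exact ⟨by linarith [this.1], this.2⟩)).integrable
      le_top
  have hbound : ∀ m : MeasurableSpace Ω,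
      (ℙ[(fun _ => (1:ℝ)) | m] = fun _ => (1:ℝ)) → ∀ᵐ ω ∂ℙ, |(ℙ[Y | m]) ω| ≤ 1 := by
    intro m h1'
    have h0 : (0:Ω → ℝ) ≤ᵐ[ℙ] ℙ[Y | m] := condExp_nonneg hY0
    have h1 : ℙ[Y | m] ≤ᵐ[ℙ] ℙ[(fun _ => (1:ℝ)) | m] := condExp_mono hYint (integrable_const 1) hY1
    filter_upwards [h0, h1] with ω h0 h1
    rw [abs_le]
    simp only [Pi.zero_apply] at h0
    refine ⟨by linarith, ?_⟩
    calc (ℙ[Y|m]) ω ≤ (ℙ[(fun _ => (1:ℝ))|m]) ω := h1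
      _ = 1 := by rw [h1']
  have hfb : ∀ᵐ ω ∂ℙ, |f ω| ≤ 1 := hbound m1 (condExp_const hm1 1)
  have hgb : ∀ᵐ ω ∂ℙ, |g ω| ≤ 1 := hbound m2 (condExp_const hm2 1)
  have habs2 : ∀ a b : ℝ, |a| ≤ 1 → |b| ≤ 1 → |a - b| ≤ 2 := by
    intro a b ha hb; rw [abs_le] at *; constructor <;> linarith
  have hFmeas : Measurable[m0] F := hF.mono hm2 le_rfl
  have hfm : Measurable[m0] f := (stronglyMeasurable_condExp.mono hm1).measurable
  have hgm : Measurable[m0] g := (stronglyMeasurable_condExp.mono hm2).measurable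
  have intb : ∀ (φ : Ω → ℝ), Measurable[m0] φ → (∀ᵐ ω ∂ℙ, |φ ω| ≤ 4) → Integrable φ ℙ := by
    intro φ hφ hb
    exact (memLp_top_of_bound hφ.aestronglyMeasurable 4
      (hb.mono fun ω hb => by simpa using hb)).integrable le_top
  set u : Ω → ℝ := fun ω => F ω - g ω with hudef
  set w : Ω → ℝ := fun ω => g ω - f ω with hwdef
  have huw_int : Integrable (u * w) ℙ := by
    refine intb _ ((hFmeas.sub hgm).mul (hgm.sub hfm)) ?_
    filter_upwards [hfb, hgb] with ω hf hg
    calc |(u * w) ω| = |F ω - g ω| * |g ω - f ω| := by simp [hudef, hwdef, abs_mul]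
      _ ≤ 2 * 2 := mul_le_mul (habs2 _ _ (hFb ω) hg) (habs2 _ _ hg hf) (abs_nonneg _) (by norm_num)
      _ = 4 := by norm_num
  have hw_int : Integrable w ℙ := integrable_condExp.sub integrable_condExp
  have htower : ℙ[f | m2] =ᵐ[ℙ] g := condExp_condExp_of_le hm21 hm1
  have hgcond : ℙ[g | m2] = g := condExp_of_stronglyMeasurable hm2 stronglyMeasurable_condExp
    integrable_condExp
  have hwcond : ℙ[w | m2] =ᵐ[ℙ] 0 := by
    calc ℙ[w | m2] =ᵐ[ℙ] ℙ[g | m2] - ℙ[f | m2] :=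
          condExp_sub integrable_condExp integrable_condExp m2
      _ =ᵐ[ℙ] g - g := by
          filter_upwards [htower] with ω ht
          simp only [Pi.sub_apply, hgcond, ht]
      _ = 0 := by simp
  have hu_sm : StronglyMeasurable[m2] u :=
    hF.stronglyMeasurable.sub stronglyMeasurable_condExp
  have hcross : ∫ ω, u ω * w ω ∂ℙ = 0 := by
    have h1 : ℙ[u * w | m2] =ᵐ[ℙ] u * ℙ[w | m2] :=
      condExp_mul_of_stronglyMeasurable_left hu_sm huw_int hw_int
    have h2 : ℙ[u * w | m2] =ᵐ[ℙ] 0 := by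
      filter_upwards [h1, hwcond] with ω h1 h2
      simp [h1, Pi.mul_apply, h2]
    calc ∫ ω, u ω * w ω ∂ℙ = ∫ ω, (u * w) ω ∂ℙ := rfl
      _ = ∫ ω, (ℙ[u * w | m2]) ω ∂ℙ := (integral_condExp hm2).symm
      _ = ∫ ω, (0:Ω → ℝ) ω ∂ℙ := integral_congr_ae h2
      _ = 0 := by simp
  have int_sq : ∀ (φ : Ω → ℝ), Measurable[m0] φ → (∀ᵐ ω ∂ℙ, |φ ω| ≤ 2) →
      Integrable (fun ω => φ ω ^ 2) ℙ := by
    intro φ hφ hb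
    refine intb _ (hφ.pow_const 2) ?_
    filter_upwards [hb] with ω hb
    calc |φ ω ^ 2| = |φ ω| * |φ ω| := by rw [sq, abs_mul]
      _ ≤ 2 * 2 := mul_le_mul hb hb (abs_nonneg _) (by norm_num)
      _ = 4 := by norm_num
  have int1 : Integrable (fun ω => (F ω - g ω) ^ 2) ℙ := by
    refine int_sq _ (hFmeas.sub hgm) ?_
    filter_upwards [hgb] with ω hg
    exact habs2 _ _ (hFb ω) hg
  have int2 : Integrable (fun ω => (g ω - f ω) ^ 2) ℙ := by
    refine int_sq _ (hgm.sub hfm) ?_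
    filter_upwards [hfb, hgb] with ω hf hg
    exact habs2 _ _ hg hf
  have key : ∀ ω, (F ω - f ω) ^ 2 =
      (F ω - g ω) ^ 2 + (g ω - f ω) ^ 2 + 2 * (u ω * w ω) := by
    intro ω; simp only [hudef, hwdef]; ring
  calc ∫ ω, (F ω - f ω) ^ 2 ∂ℙ
      = ∫ ω, ((F ω - g ω) ^ 2 + (g ω - f ω) ^ 2 + 2 * (u ω * w ω)) ∂ℙ :=
        integral_congr_ae (Filter.Eventually.of_forall key)
    _ = (∫ ω, ((F ω - g ω) ^ 2 + (g ω - f ω) ^ 2) ∂ℙ) + ∫ ω, 2 * (u ω * w ω) ∂ℙ :=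
        integral_add (int1.add int2) (huw_int.const_mul 2)
    _ = ((∫ ω, (F ω - g ω) ^ 2 ∂ℙ) + ∫ ω, (g ω - f ω) ^ 2 ∂ℙ) + 2 * ∫ ω, u ω * w ω ∂ℙ := by
        rw [integral_add int1 int2, integral_const_mul]
    _ = (∫ ω, (F ω - g ω) ^ 2 ∂ℙ) + ∫ ω, (g ω - f ω) ^ 2 ∂ℙ := by rw [hcross]; ring

theorem stmt_0 {Ω : Type*} [MeasurableSpace Ω] (ℙ : Measure Ω) [IsProbabilityMeasure ℙ]
    (Z Y : Ω → ℝ) (hZ : Measurable Z) (hY : Measurable Y)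
    (hZrange : ∀ ω, Z ω ∈ Set.Icc (0:ℝ) 1)
    (hYrange : ∀ ω, Y ω = 0 ∨ Y ω = 1)
    (h : ℝ → ℝ) (hh : Measurable h) (hhrange : ∀ z ∈ Set.Icc (0:ℝ) 1, h z ∈ Set.Icc (0:ℝ) 1) :
    ∫ ω, (h (Z ω) - (ℙ[Y | MeasurableSpace.comap Z inferInstance]) ω) ^ 2 ∂ℙ =
      (∫ ω, (h (Z ω) - (ℙ[Y | MeasurableSpace.comap (h ∘ Z) inferInstance]) ω) ^ 2 ∂ℙ) +
      ∫ ω, ((ℙ[Y | MeasurableSpace.comap (h ∘ Z) inferInstance]) ω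
            - (ℙ[Y | MeasurableSpace.comap Z inferInstance]) ω) ^ 2 ∂ℙ := by
  have hm21 : MeasurableSpace.comap (h ∘ Z) inferInstance ≤ MeasurableSpace.comap Z inferInstance := by
    rw [← MeasurableSpace.comap_comp]
    exact MeasurableSpace.comap_mono hh.comap_le
  exact aux_decomp ℙ _ _ hZ.comap_le (hh.comp hZ).comap_le hm21 (h ∘ Z) Y
    (comap_measurable (h ∘ Z))
    (fun ω => by
      have := hhrange (Z ω) (hZrange ω)
      simp only [Function.comp_apply, abs_le]
      exact ⟨by linarith [this.1], this.2⟩)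
    hY
    (fun ω => by rcases hYrange ω with h1 | h1 <;> simp [h1])
end

section
/- Let w₀*, w₁*, ŵ₀, ŵ₁ > 0, and define g*(z) = w₁* z / (w₁* z + w₀*(1 − z)) and ĝ(z) = ŵ₁ z / (ŵ₁ z + ŵ₀(1 − z)) for z ∈ [0,1]. Let ρ₀ = ŵ₀/w₀* and ρ₁ = ŵ₁/w₁*. Then for all z ∈ [0,1], |ĝ(z) − g*(z)| ≤ |ρ₀ − ρ₁| / (ρ₀ + ρ₁). -/
theorem stmt_2 (w₀ w₁ what₀ what₁ : ℝ)
    (hw₀ : 0 < w₀) (hw₁ : 0 < w₁) (hwhat₀ : 0 < what₀) (hwhat₁ : 0 < what₁)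
    (z : ℝ) (hz : z ∈ Set.Icc (0:ℝ) 1) :
    |what₁ * z / (what₁ * z + what₀ * (1 - z)) - w₁ * z / (w₁ * z + w₀ * (1 - z))|
      ≤ |what₀ / w₀ - what₁ / w₁| / (what₀ / w₀ + what₁ / w₁) := by
  obtain ⟨hz0, hz1⟩ := hz
  have hDhat : 0 < what₁ * z + what₀ * (1 - z) := by
    rcases le_total z (1/2) with h | h
    · nlinarith [mul_nonneg hwhat₁.le hz0, mul_le_mul_of_nonneg_left h hwhat₀.le]
    · nlinarith [mul_nonneg hwhat₀.le (by linarith : (0:ℝ) ≤ 1 - z),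
        mul_le_mul_of_nonneg_left h hwhat₁.le]
  have hD : 0 < w₁ * z + w₀ * (1 - z) := by
    rcases le_total z (1/2) with h | h
    · nlinarith [mul_nonneg hw₁.le hz0, mul_le_mul_of_nonneg_left h hw₀.le]
    · nlinarith [mul_nonneg hw₀.le (by linarith : (0:ℝ) ≤ 1 - z),
        mul_le_mul_of_nonneg_left h hw₁.le]
  have hS : 0 < what₀ * w₁ + what₁ * w₀ := by positivity
  have hRHS : |what₀ / w₀ - what₁ / w₁| / (what₀ / w₀ + what₁ / w₁)
      = |what₀ * w₁ - what₁ * w₀| / (what₀ * w₁ + what₁ * w₀) := by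
    have h1 : what₀ / w₀ - what₁ / w₁ = (what₀ * w₁ - what₁ * w₀) / (w₀ * w₁) := by
      field_simp
    have h2 : what₀ / w₀ + what₁ / w₁ = (what₀ * w₁ + what₁ * w₀) / (w₀ * w₁) := by
      field_simp
    rw [h1, h2, abs_div, abs_of_pos (by positivity : (0:ℝ) < w₀ * w₁)]
    rw [div_div_div_eq]
    rw [mul_comm (w₀ * w₁), mul_div_mul_comm, div_self (by positivity : (w₀*w₁) ≠ 0), mul_one]
  rw [hRHS, div_sub_div _ _ hDhat.ne' hD.ne', abs_div,
    abs_of_pos (mul_pos hDhat hD), div_le_div_iff₀ (mul_pos hDhat hD) hS]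
  have hnum : what₁ * z * (w₁ * z + w₀ * (1 - z)) - (what₁ * z + what₀ * (1 - z)) * (w₁ * z)
      = (what₁ * w₀ - what₀ * w₁) * (z * (1 - z)) := by ring
  rw [hnum, abs_mul, abs_of_nonneg (by nlinarith : (0:ℝ) ≤ z * (1 - z))]
  have hkey : (what₀ * w₁ + what₁ * w₀) * (z * (1 - z))
      ≤ (what₁ * z + what₀ * (1 - z)) * (w₁ * z + w₀ * (1 - z)) := by
    nlinarith [mul_nonneg (mul_nonneg hwhat₁.le hw₁.le) (sq_nonneg z),
      mul_nonneg (mul_nonneg hwhat₀.le hw₀.le) (sq_nonneg (1 - z))]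
  have habs : |what₁ * w₀ - what₀ * w₁| = |what₀ * w₁ - what₁ * w₀| := abs_sub_comm _ _
  rw [habs]
  nlinarith [mul_le_mul_of_nonneg_left hkey (abs_nonneg (what₀ * w₁ - what₁ * w₀))]
end

section
/- Let (Z, Y) be random variables with Z ∈ [0,1], Y ∈ {0,1}. Let ℬ = {I₁, ..., I_B} be a partition of [0,1] into intervals and suppose the function h*(z) := E[Y | Z = z] is monotone non-decreasing in z. If the binning is α-well-balanced, i.e., P[Z ∈ I_b] ≤ α/B for all b, then the sharpness risk E[(E[Y | β(Z)] − E[Y | Z])²] ≤ α/B, where β(Z) is the index of the bin containing Z. -/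
/-!
Inside a bin both the bin mean `E[Y | β(Z)]` and `h*(Z)` lie between the infimum and the
supremum of `h*` over the bin, so, all values being in `[0,1]`, the squared error there is at
most the oscillation of `h*` on the bin. Integrating, the risk is at most `α / B` times the total
oscillation. Since `h*` is monotone and the bins are disjoint intervals, the open ranges
`(inf, sup)` of `h*` over different bins are disjoint subintervals of `[0,1]`, so the total
oscillation is at most `1`.
-/

open MeasureTheory Set Function

lemma Set.OrdConnected.forall_le_or_forall_le_of_disjoint {α : Type*} [LinearOrder α]
    {s t : Set α} (hs : s.OrdConnected) (ht : t.OrdConnected) (hst : Disjoint s t) :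
    (∀ x ∈ s, ∀ y ∈ t, x ≤ y) ∨ (∀ y ∈ t, ∀ x ∈ s, y ≤ x) := by
  by_contra! h
  obtain ⟨⟨x, hx, y, hy, hyx⟩, y', hy', x', hx', hxy'⟩ := h
  rcases le_or_gt y' x with hy'x | hxy'
  · exact hst.ne_of_mem (hs.out hx' hx ⟨hxy'.le, hy'x⟩) hy' rfl
  · exact hst.ne_of_mem hx (ht.out hy hy' ⟨hyx.le, hxy'.le⟩) rfl

lemma MonotoneOn.csSup_image_le_csInf_image {α β : Type*} [Preorder α]
    [ConditionallyCompleteLattice β] {f : α → β} {D s t : Set α} (hf : MonotoneOn f D)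
    (hsD : s ⊆ D) (htD : t ⊆ D) (hs : s.Nonempty) (ht : t.Nonempty)
    (hst : ∀ x ∈ s, ∀ y ∈ t, x ≤ y) :
    sSup (f '' s) ≤ sInf (f '' t) :=
  csSup_le (hs.image f) <| forall_mem_image.2 fun x hx =>
    le_csInf (ht.image f) <| forall_mem_image.2 fun y hy => hf (hsD hx) (htD hy) (hst x hx y hy)

-- Measuring the union with Lebesgue measure spares us from sorting the intervals.
lemma sum_sub_le_of_pairwise_disjoint_Ioo {ι : Type*} [Fintype ι] {a b : ι → ℝ} {u v : ℝ}
    (huv : u ≤ v) (hdisj : Pairwise (Disjoint on fun i => Ioo (a i) (b i)))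
    (hsub : ∀ i, Ioo (a i) (b i) ⊆ Icc u v) :
    ∑ i, (b i - a i) ≤ v - u :=
  calc ∑ i, (b i - a i) ≤ ∑ i, volume.real (Ioo (a i) (b i)) :=
        Finset.sum_le_sum fun i _ => by rw [Real.volume_real_Ioo]; exact le_max_left _ _
    _ = volume.real (⋃ i, Ioo (a i) (b i)) :=
        (measureReal_iUnion_fintype hdisj (fun _ => measurableSet_Ioo)
          fun _ => measure_Ioo_lt_top.ne).symm
    _ ≤ volume.real (Icc u v) := measureReal_mono (iUnion_subset hsub) measure_Icc_lt_top.ne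
    _ = v - u := Real.volume_real_Icc_of_le huv

lemma Set.Nonempty.Icc_csInf_csSup_subset {α : Type*} [ConditionallyCompleteLattice α]
    {s : Set α} {u v : α} (hs : s.Nonempty) (h : s ⊆ Icc u v) :
    Icc (sInf s) (sSup s) ⊆ Icc u v :=
  Icc_subset_Icc (le_csInf hs fun _ hy => (h hy).1) (csSup_le hs fun _ hy => (h hy).2)

lemma MonotoneOn.sum_sSup_image_sub_sInf_image_le {ι : Type*} [Fintype ι] {f : ℝ → ℝ}
    {D : Set ℝ} {u v : ℝ} (hf : MonotoneOn f D) (hfD : MapsTo f D (Icc u v)) (huv : u ≤ v)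
    {J : ι → Set ℝ} (hJD : ∀ i, J i ⊆ D) (hJne : ∀ i, (J i).Nonempty)
    (hJ : ∀ i, (J i).OrdConnected) (hJdisj : Pairwise (Disjoint on J)) :
    ∑ i, (sSup (f '' J i) - sInf (f '' J i)) ≤ v - u := by
  refine sum_sub_le_of_pairwise_disjoint_Ioo huv (fun i j hij => ?_) fun i => ?_
  · refine Ioo_disjoint_Ioo.2 ?_
    rcases (hJ i).forall_le_or_forall_le_of_disjoint (hJ j) (hJdisj hij) with h | h
    · exact min_le_of_left_le <| (hf.csSup_image_le_csInf_image (hJD i) (hJD j) (hJne i)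
        (hJne j) h).trans (le_max_right _ _)
    · exact min_le_of_right_le <| (hf.csSup_image_le_csInf_image (hJD j) (hJD i) (hJne j)
        (hJne i) h).trans (le_max_left _ _)
  · exact Ioo_subset_Icc_self.trans <|
      ((hJne i).image f).Icc_csInf_csSup_subset (image_subset_iff.2 ((hJD i).trans hfD))

lemma setIntegral_div_measureReal_mem_Icc {X : Type*} [MeasurableSpace X] {μ : Measure X}
    {f : X → ℝ} {s : Set X} {a b : ℝ} (hs : MeasurableSet s) (hμs : μ s ≠ 0) (hμs' : μ s ≠ ⊤)
    (hf : IntegrableOn f s μ) (hab : ∀ x ∈ s, f x ∈ Icc a b) :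
    (∫ x in s, f x ∂μ) / μ.real s ∈ Icc a b := by
  have hpos : 0 < μ.real s := ENNReal.toReal_pos hμs hμs'
  rw [mem_Icc, le_div_iff₀ hpos, div_le_iff₀ hpos]
  refine ⟨setIntegral_ge_of_const_le_real hs hμs' (fun x hx => (hab x hx).1) hf, ?_⟩
  calc ∫ x in s, f x ∂μ ≤ ∫ _ in s, b ∂μ :=
        setIntegral_mono_on hf (integrableOn_const hμs') hs fun x hx => (hab x hx).2
    _ = b * μ.real s := by rw [setIntegral_const, smul_eq_mul, mul_comm]

lemma integral_comp_eq_sum_measureReal_preimage {Ω ι : Type*} [MeasurableSpace Ω] [Fintype ι]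
    [MeasurableSpace ι] [MeasurableSingletonClass ι] {μ : Measure Ω} [IsFiniteMeasure μ]
    {k : Ω → ι} (hk : Measurable k) (F : ι → ℝ) :
    ∫ ω, F (k ω) ∂μ = ∑ i, μ.real (k ⁻¹' {i}) * F i := by
  rw [← integral_map hk.aemeasurable (Integrable.of_finite).aestronglyMeasurable,
    integral_fintype Integrable.of_finite]
  simp [map_measureReal_apply hk (measurableSet_singleton _)]

lemma sq_sub_le_of_mem_Icc {x y m M : ℝ} (hmM : Icc m M ⊆ Icc 0 1) (hx : x ∈ Icc m M)
    (hy : y ∈ Icc m M) : (x - y) ^ 2 ≤ M - m := by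
  obtain ⟨hm, hM⟩ := (Icc_subset_Icc_iff (hx.1.trans hx.2)).1 hmM
  obtain ⟨hx₁, hx₂⟩ := hx
  obtain ⟨hy₁, hy₂⟩ := hy
  nlinarith

lemma integral_sq_sub_le_mul_sum {Ω ι : Type*} [MeasurableSpace Ω] [Fintype ι]
    [MeasurableSpace ι] [MeasurableSingletonClass ι] {μ : Measure Ω} [IsFiniteMeasure μ]
    {k : Ω → ι} (hk : Measurable k) {c m M : ι → ℝ} {g : Ω → ℝ} {ε : ℝ}
    (hmM : ∀ i, Icc (m i) (M i) ⊆ Icc 0 1) (hc : ∀ i, c i ∈ Icc (m i) (M i))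
    (hg : ∀ ω, g ω ∈ Icc (m (k ω)) (M (k ω))) (hε : ∀ i, μ.real (k ⁻¹' {i}) ≤ ε) :
    ∫ ω, (c (k ω) - g ω) ^ 2 ∂μ ≤ ε * ∑ i, (M i - m i) :=
  calc ∫ ω, (c (k ω) - g ω) ^ 2 ∂μ ≤ ∫ ω, (M (k ω) - m (k ω)) ∂μ :=
        integral_mono_of_nonneg (ae_of_all _ fun _ => sq_nonneg _)
          ((Integrable.of_finite (f := fun i => M i - m i)).comp_measurable hk)
          (ae_of_all _ fun ω => sq_sub_le_of_mem_Icc (hmM _) (hc _) (hg ω))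
    _ = ∑ i, μ.real (k ⁻¹' {i}) * (M i - m i) :=
        integral_comp_eq_sum_measureReal_preimage hk fun i => M i - m i
    _ ≤ ∑ i, ε * (M i - m i) := Finset.sum_le_sum fun i _ =>
        mul_le_mul_of_nonneg_right (hε i) (sub_nonneg.2 ((hc i).1.trans (hc i).2))
    _ = ε * ∑ i, (M i - m i) := (Finset.mul_sum _ _ _).symm

lemma setIntegral_preimage_eq_of_ae_eq_condExp {Ω E : Type*} [MeasurableSpace Ω]
    [mE : MeasurableSpace E] {μ : Measure Ω} [IsFiniteMeasure μ] {Z : Ω → E} (hZ : Measurable Z)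
    {Y : Ω → ℝ} (hY : Integrable Y μ) {h : E → ℝ}
    (hh : (fun ω => h (Z ω)) =ᵐ[μ] μ[Y | mE.comap Z]) {A : Set E} (hA : MeasurableSet A) :
    ∫ ω in Z ⁻¹' A, h (Z ω) ∂μ = ∫ ω in Z ⁻¹' A, Y ω ∂μ := by
  rw [← setIntegral_condExp hZ.comap_le hY ⟨A, hA, rfl⟩]
  exact setIntegral_congr_ae (hZ hA) (hh.mono fun ω hω _ => hω)

theorem stmt_7_general {Ω : Type*} [MeasurableSpace Ω] (ℙ : Measure Ω) [IsProbabilityMeasure ℙ]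
    (Z Y : Ω → ℝ) (hZ : Measurable Z) (hY : Measurable Y)
    (hZrange : ∀ ω, Z ω ∈ Set.Icc (0:ℝ) 1) (hYrange : ∀ ω, Y ω = 0 ∨ Y ω = 1)
    (B : ℕ) (I : Fin B → Set ℝ)
    (hImeas : ∀ b, MeasurableSet (I b)) (hIint : ∀ b, (I b).OrdConnected)
    (hIdisj : Pairwise (Function.onFun Disjoint I))
    (β : ℝ → Fin B) (hβ : ∀ z ∈ Set.Icc (0:ℝ) 1, z ∈ I (β z))
    (hstar : ℝ → ℝ) (hmono : MonotoneOn hstar (Set.Icc (0:ℝ) 1))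
    (hrange : ∀ z ∈ Set.Icc (0:ℝ) 1, hstar z ∈ Set.Icc (0:ℝ) 1)
    (hversion : (fun ω => hstar (Z ω)) =ᵐ[ℙ] ℙ[Y | MeasurableSpace.comap Z inferInstance])
    (μbar : Fin B → ℝ)
    (hμbar : ∀ b, μbar b =
      (∫ ω in {ω | Z ω ∈ I b}, Y ω ∂ℙ) / (ℙ {ω | Z ω ∈ I b}).toReal)
    (hpos : ∀ b, ℙ {ω | Z ω ∈ I b} ≠ 0)
    (α : ℝ) (hα : 1 ≤ α) (hbal : ∀ b, (ℙ {ω | Z ω ∈ I b}).toReal ≤ α / B) :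
    ∫ ω, (μbar (β (Z ω)) - hstar (Z ω)) ^ 2 ∂ℙ ≤ α / B := by
  set J : Fin B → Set ℝ := fun b => I b ∩ Icc 0 1
  set m : Fin B → ℝ := fun b => sInf (hstar '' J b)
  set M : Fin B → ℝ := fun b => sSup (hstar '' J b)
  have hJne (b : Fin B) : (J b).Nonempty :=
    let ⟨ω, hω⟩ := nonempty_of_measure_ne_zero (hpos b)
    ⟨Z ω, hω, hZrange ω⟩
  have hJrange (b : Fin B) : hstar '' J b ⊆ Icc 0 1 := image_subset_iff.2 fun z hz => hrange z hz.2
  have hstar_mem (b : Fin B) (z : ℝ) (hz : z ∈ J b) : hstar z ∈ Icc (m b) (M b) :=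
    subset_Icc_csInf_csSup (bddBelow_Icc.mono (hJrange b)) (bddAbove_Icc.mono (hJrange b))
      (mem_image_of_mem _ hz)
  have hfiber (b : Fin B) : (fun ω => β (Z ω)) ⁻¹' {b} = Z ⁻¹' I b := by
    ext ω
    refine ⟨fun h => h ▸ hβ _ (hZrange ω), fun h => ?_⟩
    by_contra hne
    exact (hIdisj hne).ne_of_mem (hβ _ (hZrange ω)) h rfl
  have hYint : Integrable Y ℙ := Integrable.of_bound hY.aestronglyMeasurable 1 <|
    ae_of_all _ fun ω => by rcases hYrange ω with h | h <;> simp [h]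
  have hμbar_mem (b : Fin B) : μbar b ∈ Icc (m b) (M b) := by
    rw [hμbar b]
    change (∫ ω in Z ⁻¹' I b, Y ω ∂ℙ) / ℙ.real (Z ⁻¹' I b) ∈ _
    rw [← setIntegral_preimage_eq_of_ae_eq_condExp hZ hYint hversion (hImeas b)]
    exact setIntegral_div_measureReal_mem_Icc (hZ (hImeas b)) (hpos b) (measure_ne_top _ _)
      (integrable_condExp.congr hversion.symm).integrableOn
      fun ω hω => hstar_mem b _ ⟨hω, hZrange ω⟩
  have hosc : ∑ b, (M b - m b) ≤ 1 := by
    simpa using hmono.sum_sSup_image_sub_sInf_image_le hrange zero_le_one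
      (fun _ => inter_subset_right) hJne (fun b => (hIint b).inter ordConnected_Icc)
      fun _ _ hne => (hIdisj hne).mono inter_subset_left inter_subset_left
  calc ∫ ω, (μbar (β (Z ω)) - hstar (Z ω)) ^ 2 ∂ℙ ≤ α / B * ∑ b, (M b - m b) :=
        integral_sq_sub_le_mul_sum (measurable_to_countable' fun b => hfiber b ▸ hZ (hImeas b))
          (fun b => ((hJne b).image _).Icc_csInf_csSup_subset (hJrange b)) hμbar_mem
          (fun ω => hstar_mem _ _ ⟨hβ _ (hZrange ω), hZrange ω⟩) fun b => hfiber b ▸ hbal b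
    _ ≤ α / B := mul_le_of_le_one_right (div_nonneg (by linarith) B.cast_nonneg) hosc

theorem stmt_7 {Ω : Type*} [MeasurableSpace Ω] (ℙ : Measure Ω) [IsProbabilityMeasure ℙ]
    (Z Y : Ω → ℝ) (hZ : Measurable Z) (hY : Measurable Y)
    (hZrange : ∀ ω, Z ω ∈ Set.Icc (0:ℝ) 1) (hYrange : ∀ ω, Y ω = 0 ∨ Y ω = 1)
    (B : ℕ) (hB : 0 < B) (I : Fin B → Set ℝ)
    (hImeas : ∀ b, MeasurableSet (I b)) (hIint : ∀ b, (I b).OrdConnected)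
    (hIdisj : Pairwise (Function.onFun Disjoint I))
    (hIcover : (⋃ b, I b) = Set.Icc (0:ℝ) 1)
    (β : ℝ → Fin B) (hβ : ∀ z ∈ Set.Icc (0:ℝ) 1, z ∈ I (β z))
    (hstar : ℝ → ℝ) (hmono : MonotoneOn hstar (Set.Icc (0:ℝ) 1))
    (hrange : ∀ z ∈ Set.Icc (0:ℝ) 1, hstar z ∈ Set.Icc (0:ℝ) 1)
    (hversion : (fun ω => hstar (Z ω)) =ᵐ[ℙ] ℙ[Y | MeasurableSpace.comap Z inferInstance])
    (μbar : Fin B → ℝ)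
    (hμbar : ∀ b, μbar b =
      (∫ ω in {ω | Z ω ∈ I b}, Y ω ∂ℙ) / (ℙ {ω | Z ω ∈ I b}).toReal)
    (hpos : ∀ b, ℙ {ω | Z ω ∈ I b} ≠ 0)
    (α : ℝ) (hα : 1 ≤ α) (hbal : ∀ b, (ℙ {ω | Z ω ∈ I b}).toReal ≤ α / B) :
    ∫ ω, (μbar (β (Z ω)) - hstar (Z ω)) ^ 2 ∂ℙ ≤ α / B :=
  stmt_7_general ℙ Z Y hZ hY hZrange hYrange B I hImeas hIint hIdisj β hβ hstar hmono hrange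
    hversion μbar hμbar hpos α hα hbal
end

section
/- Let (Z, Y) be as above, ℬ = {I₁,...,I_B} a partition of [0,1] into intervals, h*(z) = E[Y | Z = z] monotone non-decreasing and K-smooth with respect to the CDF F_Z of Z (meaning h*(z₂) − h*(z₁) ≤ K(F_Z(z₂) − F_Z(z₁)) whenever z₁ ≤ z₂). If P[Z ∈ I_b] ≤ α/B for all b, then the sharpness risk E[(E[Y | β(Z)] − E[Y | Z])²] ≤ K²α³/B². -/
open MeasureTheory

theorem stmt_8 {Ω : Type*} [MeasurableSpace Ω] (ℙ : Measure Ω) [IsProbabilityMeasure ℙ]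
    (Z Y : Ω → ℝ) (hZ : Measurable Z) (hY : Measurable Y)
    (hZrange : ∀ ω, Z ω ∈ Set.Icc (0:ℝ) 1) (hYrange : ∀ ω, Y ω = 0 ∨ Y ω = 1)
    (B : ℕ) (hB : 0 < B) (I : Fin B → Set ℝ)
    (hImeas : ∀ b, MeasurableSet (I b)) (hIint : ∀ b, (I b).OrdConnected)
    (hIdisj : Pairwise (Function.onFun Disjoint I))
    (hIcover : (⋃ b, I b) = Set.Icc (0:ℝ) 1)
    (β : ℝ → Fin B) (hβ : ∀ z ∈ Set.Icc (0:ℝ) 1, z ∈ I (β z))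
    (hstar : ℝ → ℝ) (hmono : MonotoneOn hstar (Set.Icc (0:ℝ) 1))
    (hrange : ∀ z ∈ Set.Icc (0:ℝ) 1, hstar z ∈ Set.Icc (0:ℝ) 1)
    (hversion : (fun ω => hstar (Z ω)) =ᵐ[ℙ] ℙ[Y | MeasurableSpace.comap Z inferInstance])
    (μbar : Fin B → ℝ)
    (hμbar : ∀ b, μbar b =
      (∫ ω in {ω | Z ω ∈ I b}, Y ω ∂ℙ) / (ℙ {ω | Z ω ∈ I b}).toReal)
    (hpos : ∀ b, ℙ {ω | Z ω ∈ I b} ≠ 0)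
    (α K : ℝ) (hα : 1 ≤ α) (hK : 0 ≤ K)
    (F : ℝ → ℝ) (hF : ∀ z, F z = (ℙ {ω | Z ω ≤ z}).toReal)
    (hsmooth : ∀ z₁ z₂ : ℝ, z₁ ≤ z₂ → hstar z₂ - hstar z₁ ≤ K * (F z₂ - F z₁))
    (hbal : ∀ b, (ℙ {ω | Z ω ∈ I b}).toReal ≤ α / B) :
    ∫ ω, (μbar (β (Z ω)) - hstar (Z ω)) ^ 2 ∂ℙ ≤ K ^ 2 * α ^ 3 / B ^ 2 := by
  classical
  have hm : MeasurableSpace.comap Z inferInstance ≤ ‹MeasurableSpace Ω› := hZ.comap_le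
  set A : Fin B → Set Ω := fun b => {ω | Z ω ∈ I b} with hA_def
  have hAmeas : ∀ b, MeasurableSet (A b) := fun b => hZ (hImeas b)
  have hAdisj : Pairwise (Function.onFun Disjoint A) := fun b b' hbb' =>
    (hIdisj hbb').preimage Z
  have hAcover : (⋃ b, A b) = Set.univ := by
    ext ω
    simp only [Set.mem_iUnion, Set.mem_univ, iff_true]
    have h1 : Z ω ∈ ⋃ b, I b := hIcover ▸ hZrange ω
    obtain ⟨i, hi⟩ := Set.mem_iUnion.mp h1
    exact ⟨i, hi⟩
  have hβb : ∀ b, ∀ ω ∈ A b, β (Z ω) = b := by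
    intro b ω hω
    by_contra hne
    have h1 : Z ω ∈ I (β (Z ω)) := hβ _ (hZrange ω)
    exact Set.disjoint_left.mp (hIdisj hne) h1 hω
  set p : Fin B → ℝ := fun b => (ℙ (A b)).toReal with hp_def
  have hppos : ∀ b, 0 < p b := fun b =>
    ENNReal.toReal_pos (hpos b) (measure_ne_top ℙ _)
  -- CDF increment bound
  have hFdiff : ∀ b, ∀ z ∈ I b, ∀ z' ∈ I b, z ≤ z' → F z' - F z ≤ p b := by
    intro b z hz z' hz' hzz'
    rw [hF, hF]
    have hdiffsub : {ω | Z ω ≤ z'} \ {ω | Z ω ≤ z} ⊆ A b := by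
      rintro ω ⟨h1, h2⟩
      simp only [Set.mem_setOf_eq, not_le] at h1 h2
      exact (hIint b).out hz hz' ⟨le_of_lt h2, h1⟩
    have hsub : {ω | Z ω ≤ z'} ⊆ {ω | Z ω ≤ z} ∪ ({ω | Z ω ≤ z'} \ {ω | Z ω ≤ z}) := by
      intro ω h
      by_cases hc : Z ω ≤ z
      · exact Or.inl hc
      · exact Or.inr ⟨h, hc⟩
    have h1 : ℙ {ω | Z ω ≤ z'} ≤ ℙ {ω | Z ω ≤ z} + ℙ (A b) :=
      le_trans (measure_mono hsub)
        (le_trans (measure_union_le _ _) (add_le_add le_rfl (measure_mono hdiffsub)))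
    have h2 : (ℙ {ω | Z ω ≤ z'}).toReal ≤ (ℙ {ω | Z ω ≤ z}).toReal + (ℙ (A b)).toReal := by
      rw [← ENNReal.toReal_add (measure_ne_top ℙ _) (measure_ne_top ℙ _)]
      exact ENNReal.toReal_mono (by finiteness) h1
    linarith
  -- oscillation bound
  have hosc : ∀ b, ∀ ω' ∈ A b, ∀ ω ∈ A b, hstar (Z ω') ≤ hstar (Z ω) + K * p b := by
    intro b ω' hω' ω hω
    have hKp : 0 ≤ K * p b := mul_nonneg hK (hppos b).le
    rcases le_total (Z ω') (Z ω) with h | h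
    · have := hmono (hZrange ω') (hZrange ω) h
      linarith
    · have h1 := hsmooth (Z ω) (Z ω') h
      have h2 := hFdiff b (Z ω) hω (Z ω') hω' h
      nlinarith [mul_le_mul_of_nonneg_left h2 hK]
  -- integrability facts
  have hYint : Integrable Y ℙ := by
    apply Integrable.mono' (integrable_const 1) hY.aestronglyMeasurable
    filter_upwards with ω
    rcases hYrange ω with h | h <;> simp [h]
  have hhint : Integrable (fun ω => hstar (Z ω)) ℙ := integrable_condExp.congr hversion.symm
  have hhsm : AEStronglyMeasurable (fun ω => hstar (Z ω)) ℙ := hhint.1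
  have hAm : ∀ b, MeasurableSet[MeasurableSpace.comap Z inferInstance] (A b) :=
    fun b => ⟨I b, hImeas b, rfl⟩
  -- transfer: bin average of Y = bin average of hstar ∘ Z
  have hμint : ∀ b, μbar b * p b = ∫ ω in A b, hstar (Z ω) ∂ℙ := by
    intro b
    have h1 : ∫ ω in A b, hstar (Z ω) ∂ℙ = ∫ ω in A b, Y ω ∂ℙ := by
      rw [setIntegral_congr_ae (hAmeas b) (hversion.mono fun ω h _ => h)]
      exact setIntegral_condExp hm hYint (hAm b)
    rw [h1, hμbar b]
    exact div_mul_cancel₀ _ (ne_of_gt (hppos b))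
  -- pointwise deviation bound
  have hμle : ∀ b, ∀ ω ∈ A b, |μbar b - hstar (Z ω)| ≤ K * p b := by
    intro b ω hω
    have hub : ∫ ω' in A b, hstar (Z ω') ∂ℙ ≤ (hstar (Z ω) + K * p b) * p b := by
      have h := setIntegral_mono_on hhint.integrableOn
        (integrableOn_const (measure_ne_top ℙ _)) (hAmeas b)
        (fun ω' hω' => hosc b ω' hω' ω hω)
      rwa [setIntegral_const, smul_eq_mul, mul_comm] at h
    have hlb : (hstar (Z ω) - K * p b) * p b ≤ ∫ ω' in A b, hstar (Z ω') ∂ℙ := by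
      have h := setIntegral_mono_on
        ((integrableOn_const (measure_ne_top ℙ _)) :
          IntegrableOn (fun _ => hstar (Z ω) - K * p b) (A b) ℙ)
        hhint.integrableOn (hAmeas b)
        (fun ω' hω' => by have := hosc b ω hω ω' hω'; linarith)
      rwa [setIntegral_const, smul_eq_mul, mul_comm] at h
    have hμ := hμint b
    have hpb := hppos b
    rw [abs_le]
    constructor
    · nlinarith
    · nlinarith
  -- measurability of the binned predictor
  have hgmeas : Measurable (fun ω => μbar (β (Z ω))) := by
    have heq : (fun ω => μbar (β (Z ω))) =
        fun ω => ∑ b, (A b).indicator (fun _ => μbar b) ω := by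
      funext ω
      have hω0 : ω ∈ A (β (Z ω)) := hβ _ (hZrange ω)
      rw [Finset.sum_eq_single (β (Z ω))]
      · simp [Set.indicator_of_mem hω0]
      · intro b _ hb
        apply Set.indicator_of_notMem
        intro hmem
        exact hb (hβb b ω hmem).symm
      · simp
    rw [heq]
    exact Finset.measurable_sum _ fun b _ => measurable_const.indicator (hAmeas b)
  -- μbar is in [0,1]
  have hμ01 : ∀ b, μbar b ∈ Set.Icc (0:ℝ) 1 := by
    intro b
    have h0 : 0 ≤ ∫ ω in A b, Y ω ∂ℙ :=
      setIntegral_nonneg (hAmeas b) (fun ω _ => by rcases hYrange ω with h | h <;> simp [h])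
    have h1 : ∫ ω in A b, Y ω ∂ℙ ≤ ∫ _ω in A b, (1:ℝ) ∂ℙ :=
      setIntegral_mono_on hYint.integrableOn
        (integrableOn_const (measure_ne_top ℙ _)) (hAmeas b)
        (fun ω _ => by rcases hYrange ω with h | h <;> simp [h])
    rw [setIntegral_const, smul_eq_mul, mul_one] at h1
    constructor
    · rw [hμbar b]
      exact div_nonneg h0 (hppos b).le
    · rw [hμbar b]
      exact (div_le_one (hppos b)).mpr h1
  -- integrability of the risk
  have hfint : Integrable (fun ω => (μbar (β (Z ω)) - hstar (Z ω)) ^ 2) ℙ := by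
    apply Integrable.mono' (integrable_const 1)
    · have h := (hgmeas.aestronglyMeasurable.sub hhsm).mul
        (hgmeas.aestronglyMeasurable.sub hhsm)
      simp only [← sq] at h
      exact h
    · filter_upwards with ω
      have h1 := hμ01 (β (Z ω))
      have h2 := hrange (Z ω) (hZrange ω)
      rw [Real.norm_eq_abs, abs_of_nonneg (sq_nonneg _)]
      nlinarith [h1.1, h1.2, h2.1, h2.2]
  have hB' : (0:ℝ) < (B:ℝ) := by exact_mod_cast hB
  -- per-bin bound
  have hbin : ∀ b, ∫ ω in A b, (μbar (β (Z ω)) - hstar (Z ω)) ^ 2 ∂ℙ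
      ≤ K ^ 2 * (α / B) ^ 2 * p b := by
    intro b
    have hbd : ∀ ω ∈ A b, (μbar (β (Z ω)) - hstar (Z ω)) ^ 2 ≤ K ^ 2 * (α / B) ^ 2 := by
      intro ω hω
      rw [hβb b ω hω]
      have h1 := hμle b ω hω
      have h2 : K * p b ≤ K * (α / B) := mul_le_mul_of_nonneg_left (hbal b) hK
      have h3 : |μbar b - hstar (Z ω)| ≤ K * (α / B) := h1.trans h2
      calc (μbar b - hstar (Z ω)) ^ 2 = |μbar b - hstar (Z ω)| ^ 2 := (sq_abs _).symm
        _ ≤ (K * (α / B)) ^ 2 := pow_le_pow_left₀ (abs_nonneg _) h3 2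
        _ = K ^ 2 * (α / B) ^ 2 := by ring
    have h := setIntegral_mono_on hfint.integrableOn
      (integrableOn_const (measure_ne_top ℙ _)) (hAmeas b) hbd
    rwa [setIntegral_const, smul_eq_mul, mul_comm] at h
  -- decompose the integral
  have hsum : ∫ ω, (μbar (β (Z ω)) - hstar (Z ω)) ^ 2 ∂ℙ
      = ∑ b, ∫ ω in A b, (μbar (β (Z ω)) - hstar (Z ω)) ^ 2 ∂ℙ := by
    rw [← setIntegral_univ, ← hAcover,
      integral_iUnion hAmeas hAdisj (hAcover ▸ hfint.integrableOn)]
    exact tsum_fintype _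
  have hpsum : ∑ b, p b = 1 := by
    have h1 : ∑ b, ℙ (A b) = 1 := by
      rw [← tsum_fintype (L := SummationFilter.unconditional _), ← measure_iUnion hAdisj hAmeas, hAcover, measure_univ]
    have h2 : ∑ b, p b = (∑ b, ℙ (A b)).toReal := by
      rw [ENNReal.toReal_sum (fun b _ => measure_ne_top ℙ _)]
    rw [h2, h1, ENNReal.toReal_one]
  calc ∫ ω, (μbar (β (Z ω)) - hstar (Z ω)) ^ 2 ∂ℙ
      = ∑ b, ∫ ω in A b, (μbar (β (Z ω)) - hstar (Z ω)) ^ 2 ∂ℙ := hsum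
    _ ≤ ∑ b, K ^ 2 * (α / B) ^ 2 * p b := Finset.sum_le_sum fun b _ => hbin b
    _ = K ^ 2 * (α / B) ^ 2 := by rw [← Finset.mul_sum, hpsum, mul_one]
    _ = K ^ 2 * α ^ 2 / B ^ 2 := by field_simp
    _ ≤ K ^ 2 * α ^ 3 / B ^ 2 := by
        have h : α ^ 2 ≤ α ^ 3 := pow_le_pow_right₀ hα (by norm_num)
        have hB2 : (0:ℝ) < (B:ℝ) ^ 2 := by positivity
        have h2 : K ^ 2 * α ^ 2 ≤ K ^ 2 * α ^ 3 := by nlinarith [sq_nonneg K]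
        exact div_le_div_of_nonneg_right h2 hB2.le |>.trans_eq rfl
end

section
/- Let P and Q be probability measures on 𝒳 × {0,1} satisfying the label shift assumption, let f : 𝒳 → [0,1] be measurable, and define g*(z) = w₁* z/(w₁* z + w₀*(1−z)) with wₖ* = Q[Y=k]/P[Y=k]. If Q[Y=1 | X ∈ B] = g*(P[Y=1 | X ∈ B]) holds conditionally on f(X), i.e., E_Q[Y | f(X)] = g*(E_P[Y | f(X)]) almost surely, and ĥ_P is any measurable function with values in [0,1], then E_Q[(g*(ĥ_P(f(X))) − E_Q[Y | f(X)])²] ≤ (w*_max³/w*_min²) · E_P[(ĥ_P(f(X)) − E_P[Y | f(X)])²], where w*_max = max{w₀*, w₁*} and w*_min = min{w₀*, w₁*}. -/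
open MeasureTheory

/-- Lipschitz-type bound for the shift correction map, in squared form. -/
lemma gstar_sq_lip (w₀ w₁ a b : ℝ) (h0 : 0 < w₀) (h1 : 0 < w₁)
    (ha : a ∈ Set.Icc (0:ℝ) 1) (hb : b ∈ Set.Icc (0:ℝ) 1) :
    (w₁ * a / (w₁ * a + w₀ * (1 - a)) - w₁ * b / (w₁ * b + w₀ * (1 - b))) ^ 2
      ≤ (max w₀ w₁ / min w₀ w₁) ^ 2 * (a - b) ^ 2 := by
  set M := max w₀ w₁ with hM
  set mn := min w₀ w₁ with hmn
  have hmn0 : 0 < mn := lt_min h0 h1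
  have hDa : mn ≤ w₁ * a + w₀ * (1 - a) := by
    nlinarith [min_le_left w₀ w₁, min_le_right w₀ w₁, ha.1, ha.2]
  have hDb : mn ≤ w₁ * b + w₀ * (1 - b) := by
    nlinarith [min_le_left w₀ w₁, min_le_right w₀ w₁, hb.1, hb.2]
  have hDa0 : 0 < w₁ * a + w₀ * (1 - a) := lt_of_lt_of_le hmn0 hDa
  have hDb0 : 0 < w₁ * b + w₀ * (1 - b) := lt_of_lt_of_le hmn0 hDb
  have key : w₁ * a / (w₁ * a + w₀ * (1 - a)) - w₁ * b / (w₁ * b + w₀ * (1 - b))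
      = w₀ * w₁ * (a - b) / ((w₁ * a + w₀ * (1 - a)) * (w₁ * b + w₀ * (1 - b))) := by
    field_simp
    ring
  have hDD : mn ^ 2 ≤ (w₁ * a + w₀ * (1 - a)) * (w₁ * b + w₀ * (1 - b)) := by
    have := mul_le_mul hDa hDb hmn0.le hDa0.le
    nlinarith
  have hDD0 : 0 < (w₁ * a + w₀ * (1 - a)) * (w₁ * b + w₀ * (1 - b)) :=
    mul_pos hDa0 hDb0
  have habs : |w₁ * a / (w₁ * a + w₀ * (1 - a)) - w₁ * b / (w₁ * b + w₀ * (1 - b))|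
      ≤ M / mn * |a - b| := by
    rw [key, abs_div, abs_mul]
    have h1' : |w₀ * w₁| = w₀ * w₁ := abs_of_pos (mul_pos h0 h1)
    have h2' : |(w₁ * a + w₀ * (1 - a)) * (w₁ * b + w₀ * (1 - b))|
        = (w₁ * a + w₀ * (1 - a)) * (w₁ * b + w₀ * (1 - b)) := abs_of_pos hDD0
    rw [h1', h2']
    rw [div_le_iff₀ hDD0]
    have hMm : M * mn = w₀ * w₁ := max_mul_min w₀ w₁
    have hMn0 : 0 < M := lt_max_of_lt_left h0
    have habn : 0 ≤ |a - b| := abs_nonneg _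
    have hMdiv : M / mn * mn = M := div_mul_cancel₀ M hmn0.ne'
    have h5 : M / mn * |a - b| * mn ^ 2
        ≤ M / mn * |a - b| * ((w₁ * a + w₀ * (1 - a)) * (w₁ * b + w₀ * (1 - b))) :=
      mul_le_mul_of_nonneg_left hDD (mul_nonneg (div_nonneg hMn0.le hmn0.le) habn)
    have e : M / mn * |a - b| * mn ^ 2 = w₀ * w₁ * |a - b| := by
      rw [← hMm]; field_simp
    linarith
  calc (w₁ * a / (w₁ * a + w₀ * (1 - a)) - w₁ * b / (w₁ * b + w₀ * (1 - b))) ^ 2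
      = |w₁ * a / (w₁ * a + w₀ * (1 - a)) - w₁ * b / (w₁ * b + w₀ * (1 - b))| ^ 2 :=
        (sq_abs _).symm
    _ ≤ (M / mn * |a - b|) ^ 2 := by
        apply pow_le_pow_left₀ (abs_nonneg _) habs
    _ = (M / mn) ^ 2 * (a - b) ^ 2 := by rw [mul_pow, sq_abs]

theorem stmt_11 {𝒳 : Type*} [MeasurableSpace 𝒳]
    (P Q : Measure (𝒳 × Bool)) [IsProbabilityMeasure P] [IsProbabilityMeasure Q]
    (hcond : ∀ k : Bool, ∀ B : Set 𝒳, MeasurableSet B →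
      P {ω | ω.1 ∈ B ∧ ω.2 = k} / P {ω | ω.2 = k}
        = Q {ω | ω.1 ∈ B ∧ ω.2 = k} / Q {ω | ω.2 = k})
    (hP1 : P {ω | ω.2 = true} ≠ 0) (hP1' : P {ω | ω.2 = true} ≠ 1)
    (hQ1 : Q {ω | ω.2 = true} ≠ 0) (hQ1' : Q {ω | ω.2 = true} ≠ 1)
    (f : 𝒳 → ℝ) (hf : Measurable f) (hfr : ∀ x, f x ∈ Set.Icc (0:ℝ) 1)
    (w₀ w₁ : ℝ)
    (hw₀ : w₀ = (Q {ω | ω.2 = false}).toReal / (P {ω | ω.2 = false}).toReal)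
    (hw₁ : w₁ = (Q {ω | ω.2 = true}).toReal / (P {ω | ω.2 = true}).toReal)
    (gstar : ℝ → ℝ) (hg : ∀ z, gstar z = w₁ * z / (w₁ * z + w₀ * (1 - z)))
    (Yf : 𝒳 × Bool → ℝ) (hYf : ∀ ω, Yf ω = if ω.2 then 1 else 0)
    (m : MeasurableSpace (𝒳 × Bool))
    (hm : m = MeasurableSpace.comap (fun ω => f ω.1) inferInstance)
    (hshiftrel : (fun ω => (Q[Yf | m]) ω) =ᵐ[Q] fun ω => gstar ((P[Yf | m]) ω))
    (hP : ℝ → ℝ) (hhP : Measurable hP) (hhPr : ∀ z, hP z ∈ Set.Icc (0:ℝ) 1) :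
    ∫ ω, (gstar (hP (f ω.1)) - (Q[Yf | m]) ω) ^ 2 ∂Q
      ≤ (max w₀ w₁) ^ 3 / (min w₀ w₁) ^ 2 *
          ∫ ω, (hP (f ω.1) - (P[Yf | m]) ω) ^ 2 ∂P := by
  classical
  subst hm
  -- label sets
  have hT : MeasurableSet {ω : 𝒳 × Bool | ω.2 = true} :=
    measurable_snd (MeasurableSet.singleton true)
  have hFc : {ω : 𝒳 × Bool | ω.2 = false} = {ω : 𝒳 × Bool | ω.2 = true}ᶜ := by
    ext ω; simp
  have hF : MeasurableSet {ω : 𝒳 × Bool | ω.2 = false} := by rw [hFc]; exact hT.compl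
  -- nonvanishing / finiteness of label masses
  have hPT_top : P {ω : 𝒳 × Bool | ω.2 = true} ≠ ⊤ := measure_ne_top _ _
  have hQT_top : Q {ω : 𝒳 × Bool | ω.2 = true} ≠ ⊤ := measure_ne_top _ _
  have hPF_top : P {ω : 𝒳 × Bool | ω.2 = false} ≠ ⊤ := measure_ne_top _ _
  have hQF_top : Q {ω : 𝒳 × Bool | ω.2 = false} ≠ ⊤ := measure_ne_top _ _
  have hPF0 : P {ω : 𝒳 × Bool | ω.2 = false} ≠ 0 := by
    rw [hFc, prob_compl_eq_one_sub hT]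
    intro h
    exact hP1' (le_antisymm prob_le_one (tsub_eq_zero_iff_le.mp h))
  have hQF0 : Q {ω : 𝒳 × Bool | ω.2 = false} ≠ 0 := by
    rw [hFc, prob_compl_eq_one_sub hT]
    intro h
    exact hQ1' (le_antisymm prob_le_one (tsub_eq_zero_iff_le.mp h))
  -- positivity of the weights
  have hw₁0 : 0 < w₁ := by
    rw [hw₁]
    exact div_pos (ENNReal.toReal_pos hQ1 hQT_top) (ENNReal.toReal_pos hP1 hPT_top)
  have hw₀0 : 0 < w₀ := by
    rw [hw₀]
    exact div_pos (ENNReal.toReal_pos hQF0 hQF_top) (ENNReal.toReal_pos hPF0 hPF_top)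
  have hmn0 : 0 < min w₀ w₁ := lt_min hw₀0 hw₁0
  have hM0 : 0 < max w₀ w₁ := lt_max_of_lt_left hw₀0
  set c : ENNReal := ENNReal.ofReal (max w₀ w₁) with hc
  -- weights as ENNReal ratios
  have hw₁E : ENNReal.ofReal w₁
      = Q {ω : 𝒳 × Bool | ω.2 = true} / P {ω : 𝒳 × Bool | ω.2 = true} := by
    rw [hw₁, ENNReal.ofReal_div_of_pos (ENNReal.toReal_pos hP1 hPT_top),
      ENNReal.ofReal_toReal hQT_top, ENNReal.ofReal_toReal hPT_top]
  have hw₀E : ENNReal.ofReal w₀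
      = Q {ω : 𝒳 × Bool | ω.2 = false} / P {ω : 𝒳 × Bool | ω.2 = false} := by
    rw [hw₀, ENNReal.ofReal_div_of_pos (ENNReal.toReal_pos hPF0 hPF_top),
      ENNReal.ofReal_toReal hQF_top, ENNReal.ofReal_toReal hPF_top]
  -- change of measure bound on m-measurable sets
  have hkey : ∀ s : Set (𝒳 × Bool), MeasurableSet[MeasurableSpace.comap (fun ω : 𝒳 × Bool => f ω.1) inferInstance] s → Q s ≤ c * P s := by
    intro s hs
    obtain ⟨S, hS, rfl⟩ := hs
    set A : Set (𝒳 × Bool) := (fun ω : 𝒳 × Bool => f ω.1) ⁻¹' S with hA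
    have hAmeas : MeasurableSet A := (hf.comp measurable_fst) hS
    have hpiece : ∀ k : Bool, Q (A ∩ {ω : 𝒳 × Bool | ω.2 = k})
        ≤ c * P (A ∩ {ω : 𝒳 × Bool | ω.2 = k}) := by
      intro k
      have hsets : {ω : 𝒳 × Bool | ω.1 ∈ f ⁻¹' S ∧ ω.2 = k}
          = A ∩ {ω : 𝒳 × Bool | ω.2 = k} := rfl
      have hc' := hcond k (f ⁻¹' S) (hf hS)
      rw [hsets] at hc'
      have hQk0 : Q {ω : 𝒳 × Bool | ω.2 = k} ≠ 0 := by cases k <;> assumption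
      have hQkt : Q {ω : 𝒳 × Bool | ω.2 = k} ≠ ⊤ := measure_ne_top _ _
      have hPk0 : P {ω : 𝒳 × Bool | ω.2 = k} ≠ 0 := by cases k <;> assumption
      have hPkt : P {ω : 𝒳 × Bool | ω.2 = k} ≠ ⊤ := measure_ne_top _ _
      have hqs : Q (A ∩ {ω : 𝒳 × Bool | ω.2 = k})
          = P (A ∩ {ω : 𝒳 × Bool | ω.2 = k})
              * (Q {ω : 𝒳 × Bool | ω.2 = k} / P {ω : 𝒳 × Bool | ω.2 = k}) := by
        have h1 : Q (A ∩ {ω : 𝒳 × Bool | ω.2 = k})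
            = Q (A ∩ {ω : 𝒳 × Bool | ω.2 = k}) / Q {ω : 𝒳 × Bool | ω.2 = k}
                * Q {ω : 𝒳 × Bool | ω.2 = k} :=
          (ENNReal.div_mul_cancel hQk0 hQkt).symm
        rw [h1, ← hc', div_eq_mul_inv, div_eq_mul_inv]
        ring
      rw [hqs]
      have hle : Q {ω : 𝒳 × Bool | ω.2 = k} / P {ω : 𝒳 × Bool | ω.2 = k} ≤ c := by
        cases k
        · rw [← hw₀E]; exact ENNReal.ofReal_le_ofReal (le_max_left _ _)
        · rw [← hw₁E]; exact ENNReal.ofReal_le_ofReal (le_max_right _ _)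
      calc P (A ∩ {ω : 𝒳 × Bool | ω.2 = k})
            * (Q {ω : 𝒳 × Bool | ω.2 = k} / P {ω : 𝒳 × Bool | ω.2 = k})
          ≤ P (A ∩ {ω : 𝒳 × Bool | ω.2 = k}) * c := mul_le_mul_right hle _
        _ = c * P (A ∩ {ω : 𝒳 × Bool | ω.2 = k}) := mul_comm _ _
    have hdiff : A \ {ω : 𝒳 × Bool | ω.2 = true} = A ∩ {ω : 𝒳 × Bool | ω.2 = false} := by
      ext ω
      simp [Set.mem_diff, hA]
    have hsplitQ : Q A = Q (A ∩ {ω : 𝒳 × Bool | ω.2 = true})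
        + Q (A ∩ {ω : 𝒳 × Bool | ω.2 = false}) := by
      rw [← hdiff]; exact (measure_inter_add_diff A hT).symm
    have hsplitP : P A = P (A ∩ {ω : 𝒳 × Bool | ω.2 = true})
        + P (A ∩ {ω : 𝒳 × Bool | ω.2 = false}) := by
      rw [← hdiff]; exact (measure_inter_add_diff A hT).symm
    rw [hsplitQ, hsplitP, mul_add]
    exact add_le_add (hpiece true) (hpiece false)
  -- m is a sub-σ-algebra
  have hm_le : MeasurableSpace.comap (fun ω : 𝒳 × Bool => f ω.1) inferInstance
      ≤ (Prod.instMeasurableSpace : MeasurableSpace (𝒳 × Bool)) :=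
    Measurable.comap_le (hf.comp measurable_fst)
  -- Yf facts
  have hYfmeas : Measurable Yf := by
    have : Yf = fun ω : 𝒳 × Bool => if ω.2 = true then (1:ℝ) else 0 := funext fun ω => hYf ω
    rw [this]
    exact Measurable.ite hT measurable_const measurable_const
  have hYf0 : ∀ ω, 0 ≤ Yf ω := fun ω => by rw [hYf]; split <;> norm_num
  have hYf1 : ∀ ω, Yf ω ≤ 1 := fun ω => by rw [hYf]; split <;> norm_num
  have hYfIntP : Integrable Yf P := by
    refine (integrable_const (1:ℝ)).mono' hYfmeas.aestronglyMeasurable ?_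
    refine ae_of_all _ fun ω => ?_
    rw [Real.norm_eq_abs, abs_of_nonneg (hYf0 ω)]
    exact hYf1 ω
  set EP : 𝒳 × Bool → ℝ := P[Yf|MeasurableSpace.comap (fun ω : 𝒳 × Bool => f ω.1) inferInstance] with hEP
  set EQ : 𝒳 × Bool → ℝ := Q[Yf|MeasurableSpace.comap (fun ω : 𝒳 × Bool => f ω.1) inferInstance] with hEQ
  -- bounds on EP, P-a.e.
  have hEP0 : 0 ≤ᵐ[P] EP := condExp_nonneg (ae_of_all _ hYf0)
  have hEP1 : EP ≤ᵐ[P] fun _ => (1:ℝ) := by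
    have h := condExp_mono (μ := P)
      (m := MeasurableSpace.comap (fun ω : 𝒳 × Bool => f ω.1) inferInstance) hYfIntP (integrable_const (1:ℝ))
      (ae_of_all _ hYf1)
    rwa [condExp_const hm_le] at h
  have hEPiccP : ∀ᵐ ω ∂P, EP ω ∈ Set.Icc (0:ℝ) 1 := by
    filter_upwards [hEP0, hEP1] with ω h1 h2
    exact ⟨h1, h2⟩
  -- m-measurability of EP and transfer of the a.e. bound to Q
  have hEPm : Measurable[MeasurableSpace.comap (fun ω : 𝒳 × Bool => f ω.1) inferInstance] EP := stronglyMeasurable_condExp.measurable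
  have hNm : MeasurableSet[MeasurableSpace.comap (fun ω : 𝒳 × Bool => f ω.1) inferInstance] {ω | ¬ EP ω ∈ Set.Icc (0:ℝ) 1} :=
    (hEPm measurableSet_Icc).compl
  have hPN : P {ω | ¬ EP ω ∈ Set.Icc (0:ℝ) 1} = 0 := ae_iff.mp hEPiccP
  have hQN : Q {ω | ¬ EP ω ∈ Set.Icc (0:ℝ) 1} = 0 := by
    refine le_antisymm ?_ zero_le
    calc Q {ω | ¬ EP ω ∈ Set.Icc (0:ℝ) 1}
        ≤ c * P {ω | ¬ EP ω ∈ Set.Icc (0:ℝ) 1} := hkey _ hNm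
      _ = 0 := by rw [hPN, mul_zero]
  have hEPiccQ : ∀ᵐ ω ∂Q, EP ω ∈ Set.Icc (0:ℝ) 1 := ae_iff.mpr hQN
  -- measurability of the various functions
  have hfm_m : Measurable[MeasurableSpace.comap (fun ω : 𝒳 × Bool => f ω.1) inferInstance]
      (fun ω : 𝒳 × Bool => f ω.1) := Measurable.of_comap_le le_rfl
  set φ : 𝒳 × Bool → ℝ := fun ω => (hP (f ω.1) - EP ω) ^ 2 with hφ
  have hφm : Measurable[MeasurableSpace.comap (fun ω : 𝒳 × Bool => f ω.1) inferInstance] φ := ((hhP.comp hfm_m).sub hEPm).pow_const 2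
  have hφamb : Measurable φ := hφm.mono hm_le le_rfl
  have hφ0 : ∀ ω, 0 ≤ φ ω := fun ω => sq_nonneg _
  have hgm : Measurable gstar := by
    have : gstar = fun z => w₁ * z / (w₁ * z + w₀ * (1 - z)) := funext hg
    rw [this]
    exact (measurable_const.mul measurable_id).div
      ((measurable_const.mul measurable_id).add
        (measurable_const.mul (measurable_const.sub measurable_id)))
  have hEQamb : Measurable EQ :=
    (stronglyMeasurable_condExp (m := MeasurableSpace.comap (fun ω : 𝒳 × Bool => f ω.1) inferInstance)).measurable.mono hm_le le_rfl
  have hLmeas : Measurable (fun ω : 𝒳 × Bool => (gstar (hP (f ω.1)) - EQ ω) ^ 2) :=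
    ((hgm.comp (hhP.comp (hf.comp measurable_fst))).sub hEQamb).pow_const 2
  -- pointwise a.e. inequality under Q
  set L : ℝ := (max w₀ w₁ / min w₀ w₁) ^ 2 with hL
  have hL0 : 0 ≤ L := sq_nonneg _
  have hae : ∀ᵐ ω ∂Q, (gstar (hP (f ω.1)) - EQ ω) ^ 2 ≤ L * φ ω := by
    filter_upwards [hshiftrel, hEPiccQ] with ω h1 h2
    have h1' : EQ ω = gstar (EP ω) := h1
    rw [h1', hg, hg]
    exact gstar_sq_lip w₀ w₁ (hP (f ω.1)) (EP ω) hw₀0 hw₁0 (hhPr _) h2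
  -- lintegral quantities
  set IQ : ENNReal := ∫⁻ ω, ENNReal.ofReal ((gstar (hP (f ω.1)) - EQ ω) ^ 2) ∂Q with hIQ
  set IφQ : ENNReal := ∫⁻ ω, ENNReal.ofReal (φ ω) ∂Q with hIφQ
  set IφP : ENNReal := ∫⁻ ω, ENNReal.ofReal (φ ω) ∂P with hIφP
  have step1 : ∫ ω, (gstar (hP (f ω.1)) - EQ ω) ^ 2 ∂Q = IQ.toReal :=
    integral_eq_lintegral_of_nonneg_ae (ae_of_all _ fun ω => sq_nonneg _)
      hLmeas.aestronglyMeasurable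
  have hofRealφ : Measurable (fun ω => ENNReal.ofReal (φ ω)) :=
    ENNReal.measurable_ofReal.comp hφamb
  have step2 : IQ ≤ ENNReal.ofReal L * IφQ := by
    calc IQ ≤ ∫⁻ ω, ENNReal.ofReal (L * φ ω) ∂Q := by
          refine lintegral_mono_ae ?_
          filter_upwards [hae] with ω h
          exact ENNReal.ofReal_le_ofReal h
      _ = ∫⁻ ω, ENNReal.ofReal L * ENNReal.ofReal (φ ω) ∂Q := by
          refine lintegral_congr fun ω => ?_
          rw [ENNReal.ofReal_mul hL0]
      _ = ENNReal.ofReal L * IφQ := lintegral_const_mul _ hofRealφ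
  have hofRealφm : Measurable[MeasurableSpace.comap (fun ω : 𝒳 × Bool => f ω.1) inferInstance] (fun ω => ENNReal.ofReal (φ ω)) :=
    ENNReal.measurable_ofReal.comp hφm
  have step3 : IφQ ≤ c * IφP := by
    have hle : Q.trim hm_le ≤ c • P.trim hm_le := by
      refine Measure.le_iff.mpr fun s hs => ?_
      rw [trim_measurableSet_eq hm_le hs, Measure.smul_apply, smul_eq_mul,
        trim_measurableSet_eq hm_le hs]
      exact hkey s hs
    calc IφQ = ∫⁻ ω, ENNReal.ofReal (φ ω) ∂(Q.trim hm_le) :=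
          (lintegral_trim hm_le hofRealφm).symm
      _ ≤ ∫⁻ ω, ENNReal.ofReal (φ ω) ∂(c • P.trim hm_le) := lintegral_mono' hle le_rfl
      _ = c * ∫⁻ ω, ENNReal.ofReal (φ ω) ∂(P.trim hm_le) := lintegral_smul_measure _ _
      _ = c * IφP := by rw [lintegral_trim hm_le hofRealφm]
  -- finiteness of IφP
  have hφle1 : ∀ᵐ ω ∂P, φ ω ≤ 1 := by
    filter_upwards [hEPiccP] with ω h
    show (hP (f ω.1) - EP ω) ^ 2 ≤ 1
    have h1 := (hhPr (f ω.1)).1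
    have h2 := (hhPr (f ω.1)).2
    have h3 := h.1
    have h4 := h.2
    nlinarith [mul_nonneg h1 h3, mul_nonneg (sub_nonneg.mpr h2) (sub_nonneg.mpr h4),
      mul_nonneg h1 (sub_nonneg.mpr h2), mul_nonneg h3 (sub_nonneg.mpr h4)]
  have hIφP_le : IφP ≤ 1 := by
    calc IφP ≤ ∫⁻ _, 1 ∂P := by
          refine lintegral_mono_ae ?_
          filter_upwards [hφle1] with ω h
          exact ENNReal.ofReal_le_one.mpr h
      _ = 1 := by rw [lintegral_one, measure_univ]
  have hIφP_top : IφP ≠ ⊤ := ne_top_of_le_ne_top ENNReal.one_ne_top hIφP_le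
  have step5 : ∫ ω, φ ω ∂P = IφP.toReal :=
    integral_eq_lintegral_of_nonneg_ae (ae_of_all _ hφ0) hφamb.aestronglyMeasurable
  -- combine
  have hfin : ENNReal.ofReal L * (c * IφP) ≠ ⊤ :=
    ENNReal.mul_ne_top ENNReal.ofReal_ne_top (ENNReal.mul_ne_top ENNReal.ofReal_ne_top hIφP_top)
  have hmain : IQ.toReal ≤ (ENNReal.ofReal L * (c * IφP)).toReal := by
    refine ENNReal.toReal_mono hfin ?_
    exact le_trans step2 (mul_le_mul_right step3 _)
  have hrhs : (ENNReal.ofReal L * (c * IφP)).toReal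
      = L * (max w₀ w₁ * IφP.toReal) := by
    rw [ENNReal.toReal_mul, ENNReal.toReal_mul, ENNReal.toReal_ofReal hL0,
      ENNReal.toReal_ofReal hM0.le]
  have hconst : L * max w₀ w₁ = (max w₀ w₁) ^ 3 / (min w₀ w₁) ^ 2 := by
    rw [hL]
    field_simp
  calc ∫ ω, (gstar (hP (f ω.1)) - EQ ω) ^ 2 ∂Q = IQ.toReal := step1
    _ ≤ (ENNReal.ofReal L * (c * IφP)).toReal := hmain
    _ = L * (max w₀ w₁ * IφP.toReal) := hrhs
    _ = (max w₀ w₁) ^ 3 / (min w₀ w₁) ^ 2 * IφP.toReal := by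
        rw [← mul_assoc, hconst]
    _ = (max w₀ w₁) ^ 3 / (min w₀ w₁) ^ 2 * ∫ ω, φ ω ∂P := by rw [step5]
end
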